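/- Let μ be a d-Ahlfors regular Radon measure on ℝⁿ with constant C₀ > 1. Let ξ : [0,1] → ℝ be a C¹ nonnegative function, positive on (0,1), with ξ_ε(r) = ε⁻ⁿ ξ(r/ε). Set β = min { ξ(s) : s ∈ [C₀^{-2/d}/4, 1/2] } > 0. Then for every ε ∈ (0,1), γ ∈ (0,1) with γ ≤ (8(1 + C₀^{2/d}))⁻¹, and every point z at distance at most γε from the support of μ, one has εⁿ · ∫ ξ_ε(|z − y|) dμ(y) ≥ β C₀⁻¹ 2^{−2d−1} ε^d. -/

import Mathlib

open MeasureTheory Metric Set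

/-!
On the annulus `C₀^{-2/d} ε / 4 ≤ |z - y| ≤ ε / 2` the integrand is at least `β ε⁻ⁿ`, so it
suffices to bound the `μ`-mass of this annulus from below. Take `x ∈ supp μ` with
`|z - x| ≤ γε`. The ball `B(x, (1/2 - γ)ε)` is covered by the annulus and the ball
`B(x, (C₀^{-2/d}/4 + γ)ε)`, so Ahlfors regularity bounds the mass of the annulus below by
`C₀⁻¹ ((1/2 - γ)ε)^d - C₀ ((C₀^{-2/d}/4 + γ)ε)^d = C₀⁻¹ ε^d (a^d - b^d)` with
`a = 1/2 - γ`, `b = 1/4 + C₀^{2/d} γ`. The choice of `γ` makes `a - b ≥ 1/8`, and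
`a^d - b^d ≥ (a - b) b^{d-1} ≥ 4^{-d}/2`.
-/

lemma sub_mul_pow_le_pow_succ_sub_pow_succ {a b : ℝ} (hb : 0 ≤ b) (hba : b ≤ a) (e : ℕ) :
    (a - b) * b ^ e ≤ a ^ (e + 1) - b ^ (e + 1) := by
  have hpow : a * b ^ e ≤ a * a ^ e :=
    mul_le_mul_of_nonneg_left (pow_le_pow_left₀ hb hba e) (hb.trans hba)
  rw [pow_succ', pow_succ']
  linarith

lemma quarter_pow_div_two_le_pow_sub_pow {d : ℕ} (hd : 1 ≤ d) {K γ : ℝ} (hK : 0 ≤ K)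
    (hγ0 : 0 ≤ γ) (hγ : γ ≤ (8 * (1 + K))⁻¹) :
    (1 / 4 : ℝ) ^ d / 2 ≤ (1 / 2 - γ) ^ d - (1 / 4 + K * γ) ^ d := by
  obtain ⟨e, rfl⟩ : ∃ e, d = e + 1 := ⟨d - 1, by omega⟩
  have hgap : 1 / 8 ≤ (1 / 2 - γ) - (1 / 4 + K * γ) := by
    rw [← one_div, le_div_iff₀ (by positivity)] at hγ
    linarith
  have hb : 1 / 4 ≤ 1 / 4 + K * γ := le_add_of_nonneg_right (mul_nonneg hK hγ0)
  calc (1 / 4 : ℝ) ^ (e + 1) / 2 = 1 / 8 * (1 / 4) ^ e := by ring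
    _ ≤ ((1 / 2 - γ) - (1 / 4 + K * γ)) * (1 / 4 + K * γ) ^ e := by gcongr
    _ ≤ _ := sub_mul_pow_le_pow_succ_sub_pow_succ (by linarith) (by linarith) e

lemma two_zpow_neg_two_mul_sub_one (d : ℕ) : (2 : ℝ) ^ (-(2 * (d : ℤ)) - 1) = (1 / 4) ^ d / 2 := by
  rw [zpow_sub₀ two_ne_zero, zpow_neg, zpow_mul, zpow_natCast, zpow_one, one_div, inv_pow]
  norm_num

section Annulus

variable {X : Type*} [PseudoMetricSpace X]

lemma ball_subset_annulus_union_ball {x z : X} {δ ρ R : ℝ} (hzx : dist z x ≤ δ) :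
    ball x (R - δ) ⊆ (closedBall z R \ ball z ρ) ∪ ball x (ρ + δ) := by
  intro y hy
  rw [mem_ball] at hy
  by_cases hyz : y ∈ ball z ρ
  · right
    rw [mem_ball] at hyz ⊢
    linarith [dist_triangle y z x]
  · left
    refine ⟨?_, hyz⟩
    rw [mem_closedBall]
    linarith [dist_triangle y x z, dist_comm x z]

variable [MeasurableSpace X] [ProperSpace X] (μ : Measure X) [IsFiniteMeasureOnCompacts μ]

lemma measureReal_ball_sub_le_measureReal_annulus {x z : X} {δ ρ R : ℝ} (hzx : dist z x ≤ δ) :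
    μ.real (ball x (R - δ)) - μ.real (ball x (ρ + δ)) ≤ μ.real (closedBall z R \ ball z ρ) := by
  have hA : μ (closedBall z R \ ball z ρ) ≠ ⊤ :=
    ((measure_mono sdiff_subset).trans_lt measure_closedBall_lt_top).ne
  have := (measureReal_mono (ball_subset_annulus_union_ball hzx)
    (measure_union_ne_top hA measure_ball_lt_top.ne)).trans (measureReal_union_le _ _)
  linarith

/-- `K` stands for `C₀ ^ (2 / d)`: it turns the upper regularity bound into a lower one,
`C₀ r ^ d = C₀⁻¹ (K r) ^ d`. -/
lemma measureReal_annulus_ge {d : ℕ} (hd : 1 ≤ d) {C₀ K : ℝ} (hC₀ : 0 < C₀) (hK : 1 ≤ K)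
    (hKd : K ^ d = C₀ ^ 2) {x z : X}
    (hreg : ∀ r : ℝ, 0 < r → r ≤ 1 →
      C₀⁻¹ * r ^ d ≤ μ.real (ball x r) ∧ μ.real (ball x r) ≤ C₀ * r ^ d)
    {ε γ : ℝ} (hε0 : 0 < ε) (hε1 : ε ≤ 1) (hγ0 : 0 ≤ γ) (hγ : γ ≤ (8 * (1 + K))⁻¹)
    (hzx : dist z x ≤ γ * ε) :
    C₀⁻¹ * ((1 / 4) ^ d / 2) * ε ^ d ≤
      μ.real (closedBall z (1 / 2 * ε) \ ball z (K⁻¹ / 4 * ε)) := by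
  have hγ16 : γ ≤ 1 / 16 := hγ.trans (by rw [← one_div]; gcongr; linarith)
  have hK₀ : 0 < K := by linarith
  have hKinv : K⁻¹ ≤ 1 := inv_le_one_of_one_le₀ hK
  have h₁ := (hreg (1 / 2 * ε - γ * ε) (by nlinarith) (by nlinarith)).1
  have h₂ := (hreg (K⁻¹ / 4 * ε + γ * ε) (by positivity) (by nlinarith)).2
  have hr₂ : C₀ * (K⁻¹ / 4 * ε + γ * ε) ^ d = C₀⁻¹ * ((1 / 4 + K * γ) ^ d * ε ^ d) := by
    rw [← mul_pow, show (1 / 4 + K * γ) * ε = K * (K⁻¹ / 4 * ε + γ * ε) by field_simp,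
      mul_pow, hKd]
    field_simp
  have hsub := measureReal_ball_sub_le_measureReal_annulus μ hzx (R := 1 / 2 * ε)
    (ρ := K⁻¹ / 4 * ε)
  have harith := quarter_pow_div_two_le_pow_sub_pow hd hK₀.le hγ0 hγ
  calc C₀⁻¹ * ((1 / 4) ^ d / 2) * ε ^ d
      ≤ C₀⁻¹ * ((1 / 2 - γ) ^ d - (1 / 4 + K * γ) ^ d) * ε ^ d := by gcongr
    _ = C₀⁻¹ * (1 / 2 * ε - γ * ε) ^ d - C₀ * (K⁻¹ / 4 * ε + γ * ε) ^ d := by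
        rw [hr₂, ← sub_mul (1 / 2) γ ε, mul_pow]; ring
    _ ≤ _ := by linarith

variable [OpensMeasurableSpace X]

lemma integrable_comp_dist_div {ξ : ℝ → ℝ} (hξ : Continuous ξ)
    (hξsupp : Function.support ξ ⊆ Icc 0 1) {ε : ℝ} (hε : 0 < ε) (z : X) :
    Integrable (fun y ↦ ξ (dist z y / ε)) μ := by
  refine (hξ.comp ((continuous_const.dist continuous_id).div_const ε))
    |>.integrable_of_hasCompactSupport
      (HasCompactSupport.intro (isCompact_closedBall z ε) fun y hy ↦ ?_)
  rw [mem_closedBall, dist_comm, not_le] at hy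
  exact Function.notMem_support.1 fun hmem ↦ hy.not_ge ((div_le_one hε).1 (hξsupp hmem).2)

lemma mul_measureReal_annulus_le_integral {ξ : ℝ → ℝ} (hξ : Continuous ξ) (hξ0 : ∀ r, 0 ≤ ξ r)
    (hξsupp : Function.support ξ ⊆ Icc 0 1) {a b β ε : ℝ} (hε : 0 < ε)
    (hβ : ∀ s ∈ Icc a b, β ≤ ξ s) (z : X) :
    β * μ.real (closedBall z (b * ε) \ ball z (a * ε)) ≤ ∫ y, ξ (dist z y / ε) ∂μ := by
  have hint := integrable_comp_dist_div μ hξ hξsupp hε z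
  have hA : μ (closedBall z (b * ε) \ ball z (a * ε)) ≠ ⊤ :=
    ((measure_mono sdiff_subset).trans_lt measure_closedBall_lt_top).ne
  have hβA : ∀ y ∈ closedBall z (b * ε) \ ball z (a * ε), β ≤ ξ (dist z y / ε) := by
    rintro y ⟨hyb, hya⟩
    rw [mem_closedBall, dist_comm] at hyb
    rw [mem_ball, dist_comm, not_lt] at hya
    exact hβ _ ⟨(le_div_iff₀ hε).2 hya, (div_le_iff₀ hε).2 hyb⟩
  exact (setIntegral_ge_of_const_le_real (measurableSet_closedBall.diff measurableSet_ball) hA hβA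
    hint.integrableOn).trans (setIntegral_le_integral hint (.of_forall fun _ ↦ hξ0 _))

end Annulus

theorem stmt2_general {n : ℕ} (d : ℕ) (hd : 1 ≤ d)
    (μ : Measure (EuclideanSpace ℝ (Fin n))) [IsFiniteMeasureOnCompacts μ]
    (C₀ : ℝ) (hC₀ : 1 < C₀)
    (hreg : ∀ x : EuclideanSpace ℝ (Fin n), (∀ r > (0:ℝ), 0 < μ (ball x r)) →
      ∀ r : ℝ, 0 < r → r ≤ 1 →
        C₀⁻¹ * r ^ d ≤ (μ (ball x r)).toReal ∧ (μ (ball x r)).toReal ≤ C₀ * r ^ d)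
    (ξ : ℝ → ℝ) (hξC : ContDiff ℝ 1 ξ) (hξ0 : ∀ r, 0 ≤ ξ r)
    (hξsupp : Function.support ξ ⊆ Icc 0 1)
    (β : ℝ) (hβ : β = sInf (ξ '' Icc (C₀ ^ (-2 / (d:ℝ)) / 4) (1/2))) (hβpos : 0 < β)
    (ε γ : ℝ) (hε : ε ∈ Ioo (0:ℝ) 1) (hγ : γ ∈ Ioo (0:ℝ) 1)
    (hγC : γ ≤ (8 * (1 + C₀ ^ (2 / (d:ℝ))))⁻¹)
    (z : EuclideanSpace ℝ (Fin n))
    (hz : ∃ x : EuclideanSpace ℝ (Fin n),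
      (∀ r > (0:ℝ), 0 < μ (ball x r)) ∧ dist z x ≤ γ * ε) :
    ε ^ n * ∫ y, ε ^ (-(n:ℤ)) * ξ (dist z y / ε) ∂μ ≥
      β * C₀⁻¹ * 2 ^ (-(2 * (d:ℤ)) - 1) * ε ^ d := by
  obtain ⟨x, hx, hzx⟩ := hz
  have hC₀pos : 0 < C₀ := zero_lt_one.trans hC₀
  set K := C₀ ^ (2 / (d : ℝ))
  have hK : 1 ≤ K := Real.one_le_rpow hC₀.le (by positivity)
  have hKd : K ^ d = C₀ ^ 2 := by
    rw [← Real.rpow_natCast, ← Real.rpow_mul hC₀pos.le, div_mul_cancel₀ _ (by positivity)]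
    exact Real.rpow_two C₀
  have hKinv : C₀ ^ (-2 / (d : ℝ)) = K⁻¹ := by rw [neg_div, Real.rpow_neg hC₀pos.le]
  have hβle : ∀ s ∈ Icc (K⁻¹ / 4) (1 / 2), β ≤ ξ s := fun s hs ↦
    hβ ▸ csInf_le ⟨0, forall_mem_image.2 fun s _ ↦ hξ0 s⟩ (mem_image_of_mem ξ (hKinv ▸ hs))
  have hmass := measureReal_annulus_ge μ hd hC₀pos hK hKd (hreg x hx) hε.1 hε.2.le hγ.1.le hγC hzx
  have hconv := mul_measureReal_annulus_le_integral μ hξC.continuous hξ0 hξsupp hε.1 hβle z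
  rw [integral_const_mul, ← mul_assoc, ← zpow_natCast, ← zpow_add₀ hε.1.ne', add_neg_cancel,
    zpow_zero, one_mul, two_zpow_neg_two_mul_sub_one, ge_iff_le]
  calc β * C₀⁻¹ * ((1 / 4) ^ d / 2) * ε ^ d = β * (C₀⁻¹ * ((1 / 4) ^ d / 2) * ε ^ d) := by ring
    _ ≤ _ := (mul_le_mul_of_nonneg_left hmass hβpos.le).trans hconv

/-- Lower bound for the convolved mass `εⁿ (μ * ξ_ε)(z) ≥ β C₀⁻¹ 2^{-2d-1} ε^d` for any
point `z` at distance at most `γε` from the support of a `d`-Ahlfors regular measure `μ`,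
where `β = min { ξ(s) : s ∈ [C₀^{-2/d}/4, 1/2] } > 0` and `γ ≤ (8(1 + C₀^{2/d}))⁻¹`. -/
theorem stmt2 {n : ℕ} (d : ℕ) (hd : 1 ≤ d) (hdn : d ≤ n)
    (μ : Measure (EuclideanSpace ℝ (Fin n))) [IsFiniteMeasureOnCompacts μ]
    (C₀ : ℝ) (hC₀ : 1 < C₀)
    (hreg : ∀ x : EuclideanSpace ℝ (Fin n), (∀ r > (0:ℝ), 0 < μ (ball x r)) →
      ∀ r : ℝ, 0 < r → r ≤ 1 →
        C₀⁻¹ * r ^ d ≤ (μ (ball x r)).toReal ∧ (μ (ball x r)).toReal ≤ C₀ * r ^ d)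
    (ξ : ℝ → ℝ) (hξC : ContDiff ℝ 1 ξ) (hξ0 : ∀ r, 0 ≤ ξ r)
    (hξsupp : Function.support ξ ⊆ Icc 0 1)
    (hξpos : ∀ r ∈ Ioo (0:ℝ) 1, 0 < ξ r)
    (β : ℝ) (hβ : β = sInf (ξ '' Icc (C₀ ^ (-2 / (d:ℝ)) / 4) (1/2))) (hβpos : 0 < β)
    (ε γ : ℝ) (hε : ε ∈ Ioo (0:ℝ) 1) (hγ : γ ∈ Ioo (0:ℝ) 1)
    (hγC : γ ≤ (8 * (1 + C₀ ^ (2 / (d:ℝ))))⁻¹)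
    (z : EuclideanSpace ℝ (Fin n))
    (hz : ∃ x : EuclideanSpace ℝ (Fin n),
      (∀ r > (0:ℝ), 0 < μ (ball x r)) ∧ dist z x ≤ γ * ε) :
    ε ^ n * ∫ y, ε ^ (-(n:ℤ)) * ξ (dist z y / ε) ∂μ ≥
      β * C₀⁻¹ * 2 ^ (-(2 * (d:ℤ)) - 1) * ε ^ d :=
  stmt2_general d hd μ C₀ hC₀ hreg ξ hξC hξ0 hξsupp β hβ hβpos ε γ hε hγ hγC z hz
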